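/- Let n be a natural number, let f be a Boolean function from {-1,1}^n to {-1,1}, and let M be a set of subsets of Fin n. Then there exists a vector k : ({-1,1}^n) → ℝ with k(x) > 0 for all x such that ∑_x k(x) · f(x) · χ_S(x) = 0 for every subset S ∉ M, if and only if there exists a coefficient vector a : Finset (Fin n) → ℝ with a(S) = 0 for every S ∉ M such that f(x) · ∑_S a(S) · χ_S(x) > 0 for all points x of {-1,1}^n. (The monomials outside M can be eliminated if and only if f admits a sign-representing polynomial using only monomials from M.) -/
import Mathlib


open Finset

/-- The Boolean cube `{-1,1}^n`, as a finite set of real vectors. -/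
noncomputable def cube (n : ℕ) : Finset (Fin n → ℝ) :=
  letI := Classical.decEq (Fin n → ℝ)
  (Finset.univ : Finset (Fin n → Bool)).image (fun b i => if b i then 1 else -1)

/-- The monomial `χ_S(x) = ∏_{i ∈ S} x_i`. -/
noncomputable def chi {n : ℕ} (S : Finset (Fin n)) (x : Fin n → ℝ) : ℝ :=
  ∏ i ∈ S, x i

lemma psi_inj (n : ℕ) :
    Function.Injective (fun (b : Fin n → Bool) (i : Fin n) => if b i then (1:ℝ) else -1) := by
  intro b c h
  funext i
  have := congrFun h i
  by_cases hb : b i <;> by_cases hc : c i <;> simp [hb, hc] at this ⊢ <;> norm_num at this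

lemma cube_eq (n : ℕ) [DecidableEq (Fin n → ℝ)] :
    cube n = (Finset.univ : Finset (Fin n → Bool)).image (fun b i => if b i then 1 else -1) := by
  ext x
  simp [cube]

lemma sum_cube {n : ℕ} (g : (Fin n → ℝ) → ℝ) :
    ∑ x ∈ cube n, g x = ∑ b : Fin n → Bool, g (fun i => if b i then 1 else -1) := by
  classical
  rw [cube_eq]
  exact Finset.sum_image (fun b _ c _ h => psi_inj n h)

lemma mem_cube {n : ℕ} {x : Fin n → ℝ} (hx : x ∈ cube n) (i : Fin n) :
    x i = 1 ∨ x i = -1 := by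
  classical
  rw [cube_eq, Finset.mem_image] at hx
  obtain ⟨b, _, rfl⟩ := hx
  by_cases hb : b i <;> simp [hb]

/-- Orthogonality of characters over the cube. -/
lemma orth {n : ℕ} (S T : Finset (Fin n)) :
    ∑ x ∈ cube n, chi S x * chi T x = if S = T then (2:ℝ)^n else 0 := by
  classical
  rw [sum_cube]
  have key : ∀ b : Fin n → Bool,
      chi S (fun i => if b i then (1:ℝ) else -1) * chi T (fun i => if b i then (1:ℝ) else -1)
      = ∏ i : Fin n, ((if i ∈ S then (if b i then (1:ℝ) else -1) else 1)
          * (if i ∈ T then (if b i then (1:ℝ) else -1) else 1)) := by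
    intro b
    rw [Finset.prod_mul_distrib, chi, chi]
    congr 1 <;> rw [← Finset.prod_filter] <;> simp [Finset.filter_mem_eq_inter]
  simp_rw [key]
  rw [← Fintype.prod_sum (fun (i : Fin n) (t : Bool) =>
      ((if i ∈ S then (if t then (1:ℝ) else -1) else 1)
          * (if i ∈ T then (if t then (1:ℝ) else -1) else 1)))]
  by_cases hST : S = T
  · subst hST
    simp only [if_pos rfl]
    have : ∀ i : Fin n, (∑ t : Bool, ((if i ∈ S then (if t then (1:ℝ) else -1) else 1)
        * (if i ∈ S then (if t then (1:ℝ) else -1) else 1))) = 2 := by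
      intro i; by_cases h : i ∈ S <;> simp [h, Fintype.sum_bool] <;> norm_num
    rw [Finset.prod_congr rfl (fun i _ => this i)]
    simp
  · rw [if_neg hST]
    obtain ⟨i, hi⟩ : ∃ i, ¬(i ∈ S ↔ i ∈ T) := by
      by_contra h
      push_neg at h
      exact hST (Finset.ext fun i => by have := h i; tauto)
    apply Finset.prod_eq_zero (Finset.mem_univ i)
    by_cases h1 : i ∈ S <;> by_cases h2 : i ∈ T
    · exact absurd (iff_of_true h1 h2) hi
    · simp [h1, h2, Fintype.sum_bool]
    · simp [h1, h2, Fintype.sum_bool]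
    · exact absurd (iff_of_false h1 h2) hi

/-- Dual orthogonality: sum over all characters. -/
lemma dual {n : ℕ} {x y : Fin n → ℝ} (hx : x ∈ cube n) (hy : y ∈ cube n) :
    ∑ S : Finset (Fin n), chi S x * chi S y = if x = y then (2:ℝ)^n else 0 := by
  classical
  have key : ∑ S : Finset (Fin n), chi S x * chi S y = ∏ i : Fin n, (x i * y i + 1) := by
    rw [Fintype.prod_add]
    refine Finset.sum_congr rfl fun S _ => ?_
    rw [chi, chi, ← Finset.prod_mul_distrib]
    simp
  rw [key]
  by_cases hxy : x = y
  · subst hxy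
    rw [if_pos rfl]
    have : ∀ i : Fin n, x i * x i + 1 = 2 := by
      intro i; rcases mem_cube hx i with h | h <;> rw [h] <;> norm_num
    rw [Finset.prod_congr rfl (fun i _ => this i)]
    simp
  · rw [if_neg hxy]
    obtain ⟨i, hi⟩ : ∃ i, x i ≠ y i := by
      by_contra h; push_neg at h; exact hxy (funext h)
    apply Finset.prod_eq_zero (Finset.mem_univ i)
    rcases mem_cube hx i with h1 | h1 <;> rcases mem_cube hy i with h2 | h2 <;>
      first
        | (exact absurd (h1.trans h2.symm) hi)
        | (rw [h1, h2]; ring)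

/-- The monomials outside `M` can be eliminated (there is a positive `k`
orthogonal to the columns of `Q_f` indexed by `S ∉ M`) iff `f` admits a
sign-representing polynomial using only monomials from `M`. -/
theorem eliminable_iff_sign_representation (n : ℕ) (f : (Fin n → ℝ) → ℝ)
    (hf : ∀ x ∈ cube n, f x = 1 ∨ f x = -1) (M : Set (Finset (Fin n))) :
    (∃ k : (Fin n → ℝ) → ℝ, (∀ x ∈ cube n, k x > 0) ∧
        ∀ S : Finset (Fin n), S ∉ M → ∑ x ∈ cube n, k x * f x * chi S x = 0) ↔
      (∃ a : Finset (Fin n) → ℝ, (∀ S : Finset (Fin n), S ∉ M → a S = 0) ∧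
        ∀ x ∈ cube n, f x * ∑ S : Finset (Fin n), a S * chi S x > 0) := by
  classical
  have hfsq : ∀ x ∈ cube n, f x * f x = 1 := by
    intro x hx; rcases hf x hx with h | h <;> rw [h] <;> norm_num
  constructor
  · rintro ⟨k, hkpos, hkel⟩
    refine ⟨fun S => (∑ x ∈ cube n, k x * f x * chi S x) / 2^n, ?_, ?_⟩
    · intro S hS
      show (∑ x ∈ cube n, k x * f x * chi S x) / 2^n = 0
      rw [hkel S hS]; simp
    · intro x hx
      have inv : ∑ S : Finset (Fin n),
          ((∑ y ∈ cube n, k y * f y * chi S y) / 2^n) * chi S x = k x * f x := by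
        have h1 : ∀ S : Finset (Fin n), ((∑ y ∈ cube n, k y * f y * chi S y)/2^n) * chi S x
            = (∑ y ∈ cube n, k y * f y * (chi S y * chi S x))/2^n := by
          intro S
          rw [div_mul_eq_mul_div, Finset.sum_mul]
          congr 1
          exact Finset.sum_congr rfl fun y _ => by ring
        rw [Finset.sum_congr rfl fun S _ => h1 S, ← Finset.sum_div, Finset.sum_comm]
        have h2 : ∀ y ∈ cube n, ∑ S : Finset (Fin n), k y * f y * (chi S y * chi S x)
            = k y * f y * (if y = x then (2:ℝ)^n else 0) := by
          intro y hy
          rw [← Finset.mul_sum, dual hy hx]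
        rw [Finset.sum_congr rfl h2, Finset.sum_eq_single x]
        · rw [if_pos rfl]
          field_simp
        · intro y _ hne
          rw [if_neg hne, mul_zero]
        · intro h; exact absurd hx h
      rw [inv]
      have hpos := hkpos x hx
      calc f x * (k x * f x) = k x * (f x * f x) := by ring
        _ = k x := by rw [hfsq x hx, mul_one]
        _ > 0 := hpos
  · rintro ⟨a, ha0, hapos⟩
    refine ⟨fun x => f x * ∑ S : Finset (Fin n), a S * chi S x, hapos, ?_⟩
    intro S hS
    have step : ∀ x ∈ cube n, (f x * ∑ T : Finset (Fin n), a T * chi T x) * f x * chi S x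
        = ∑ T : Finset (Fin n), a T * (chi T x * chi S x) := by
      intro x hx
      have h : (f x * ∑ T : Finset (Fin n), a T * chi T x) * f x * chi S x
          = (f x * f x) * ((∑ T : Finset (Fin n), a T * chi T x) * chi S x) := by ring
      rw [h, hfsq x hx, one_mul, Finset.sum_mul]
      exact Finset.sum_congr rfl fun T _ => by ring
    rw [Finset.sum_congr rfl step, Finset.sum_comm]
    have h2 : ∀ T : Finset (Fin n), ∑ x ∈ cube n, a T * (chi T x * chi S x)
        = a T * (if T = S then (2:ℝ)^n else 0) := by
      intro T
      rw [← Finset.mul_sum, orth]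
    rw [Finset.sum_congr rfl (fun T _ => h2 T), Finset.sum_eq_single S]
    · simp [ha0 S hS]
    · intro T _ hne
      rw [if_neg hne, mul_zero]
    · intro h; exact absurd (Finset.mem_univ S) h
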